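/- Let σ > 0 and let W_σ be the Lennard-Jones potential. Then for every a > 0, Σ_{j=1}^∞ W_σ''(a·j) = (σ^6 · a^{−14} · π^8 / 467775) · (8·σ^6·π^6 − 2079·a^6). Equivalently, Σ_{j=1}^∞ W_σ''(a·j) = 156·σ^{12}·a^{−14}·ζ(14) − 42·σ^6·a^{−8}·ζ(8), with ζ(8) = π^8/9450 and ζ(14) = 2π^{14}/18243225. -/

import Mathlib

open Real Finset Nat

/-- The Lennard-Jones potential `W_σ(t) = (σ/t)^12 − (σ/t)^6`. -/
noncomputable def LJ (σ : ℝ) : ℝ → ℝ := fun t => (σ / t) ^ 12 - (σ / t) ^ 6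

/-- Riemann zeta function for real `s > 1`: `ζ(s) = ∑_{j=1}^∞ j^{−s}`. -/
noncomputable def zetaR (s : ℝ) : ℝ := ∑' j : ℕ, ((j : ℝ) + 1) ^ (-s)

/-!
Each term `W_σ''(a j) = 156 σ^12 (a j)^{-14} − 42 σ^6 (a j)^{-8}` is a combination of
`j^{-14}` and `j^{-8}`, so the lattice sum is `156 σ^12 a^{-14} ζ(14) − 42 σ^6 a^{-8} ζ(8)`.
Euler's formula `ζ(2k) = (-1)^{k+1} 2^{2k-1} π^{2k} B_{2k} / (2k)!` with `B_8 = -1/30`,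
`B_14 = 7/6` gives the closed forms; the even Bernoulli numbers are computed from the
recursion `∑_{k<n} (n choose k) B_k = 0` (`n ≥ 2`), the odd ones past `B_1` vanishing.
-/

@[simp]
theorem bernoulli_four : bernoulli 4 = -1 / 30 := by
  rw [bernoulli_eq_bernoulli'_of_ne_one (by norm_num), bernoulli'_four]

@[simp]
theorem bernoulli_six : bernoulli 6 = 1 / 42 := by
  have h := sum_bernoulli 7
  norm_num [sum_range_succ, Nat.choose_eq_factorial_div_factorial, Nat.factorial] at h
  linarith

@[simp]
theorem bernoulli_eight : bernoulli 8 = -1 / 30 := by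
  have h := sum_bernoulli 9
  norm_num [sum_range_succ, Nat.choose_eq_factorial_div_factorial, Nat.factorial] at h
  linarith

@[simp]
theorem bernoulli_ten : bernoulli 10 = 5 / 66 := by
  have h := sum_bernoulli 11
  norm_num [sum_range_succ, Nat.choose_eq_factorial_div_factorial, Nat.factorial] at h
  linarith

@[simp]
theorem bernoulli_twelve : bernoulli 12 = -691 / 2730 := by
  have h := sum_bernoulli 13
  norm_num [sum_range_succ, Nat.choose_eq_factorial_div_factorial, Nat.factorial] at h
  linarith

@[simp]
theorem bernoulli_fourteen : bernoulli 14 = 7 / 6 := by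
  have h := sum_bernoulli 15
  norm_num [sum_range_succ, Nat.choose_eq_factorial_div_factorial, Nat.factorial] at h
  linarith

theorem zetaR_natCast (n : ℕ) : zetaR n = ∑' j : ℕ, 1 / ((j : ℝ) + 1) ^ n := by
  simp only [zetaR, one_div]
  congr 1 with j
  rw [Real.rpow_neg (by positivity), Real.rpow_natCast]

theorem hasSum_one_div_nat_add_one_pow_zetaR {n : ℕ} (hn : 1 < n) :
    HasSum (fun j : ℕ => 1 / ((j : ℝ) + 1) ^ n) (zetaR n) := by
  rw [zetaR_natCast]
  exact_mod_cast ((summable_nat_add_iff 1).mpr (Real.summable_one_div_nat_pow.mpr hn)).hasSum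

theorem zetaR_two_mul {k : ℕ} (hk : k ≠ 0) :
    zetaR (2 * k : ℕ) =
      (-1) ^ (k + 1) * 2 ^ (2 * k - 1) * π ^ (2 * k) * bernoulli (2 * k) / (2 * k)! := by
  rw [zetaR_natCast]
  simpa [hk] using ((hasSum_nat_add_iff' 1).mpr (hasSum_zeta_nat hk)).tsum_eq

theorem zetaR_eight : zetaR 8 = π ^ 8 / 9450 := by
  have h := zetaR_two_mul (k := 4) (by norm_num)
  norm_num [Nat.factorial] at h
  rw [h]
  ring

theorem zetaR_fourteen : zetaR 14 = 2 * π ^ 14 / 18243225 := by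
  have h := zetaR_two_mul (k := 7) (by norm_num)
  norm_num [Nat.factorial] at h
  rw [h]
  ring

theorem deriv_const_mul_zpow_sub_const_mul_zpow (c d : ℝ) (m n : ℤ) {t : ℝ} (ht : t ≠ 0) :
    deriv (fun x : ℝ => c * x ^ m - d * x ^ n) t =
      c * m * t ^ (m - 1) - d * n * t ^ (n - 1) := by
  have hm := (hasDerivAt_zpow m t (Or.inl ht)).const_mul c
  have hn := (hasDerivAt_zpow n t (Or.inl ht)).const_mul d
  rw [(hm.fun_sub hn).deriv]
  ring

theorem LJ_eq_zpow (σ : ℝ) :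
    LJ σ = fun t => σ ^ 12 * t ^ (-12 : ℤ) - σ ^ 6 * t ^ (-6 : ℤ) := by
  funext t
  simp [LJ, div_eq_mul_inv, mul_pow, zpow_neg]

theorem deriv_LJ (σ : ℝ) {t : ℝ} (ht : t ≠ 0) :
    deriv (LJ σ) t = -12 * σ ^ 12 * t ^ (-13 : ℤ) + 6 * σ ^ 6 * t ^ (-7 : ℤ) := by
  rw [LJ_eq_zpow, deriv_const_mul_zpow_sub_const_mul_zpow _ _ _ _ ht]
  norm_num
  ring

theorem deriv_deriv_LJ (σ : ℝ) {t : ℝ} (ht : t ≠ 0) :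
    deriv (deriv (LJ σ)) t = 156 * σ ^ 12 * t ^ (-14 : ℤ) - 42 * σ ^ 6 * t ^ (-8 : ℤ) := by
  have h : deriv (LJ σ) =ᶠ[nhds t]
      fun x => (-12 * σ ^ 12) * x ^ (-13 : ℤ) - (-6 * σ ^ 6) * x ^ (-7 : ℤ) := by
    filter_upwards [isOpen_ne.mem_nhds ht] with x hx
    rw [deriv_LJ σ hx]
    ring
  rw [h.deriv_eq, deriv_const_mul_zpow_sub_const_mul_zpow _ _ _ _ ht]
  norm_num
  ring

theorem hasSum_deriv_deriv_LJ (σ : ℝ) {a : ℝ} (ha : a ≠ 0) :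
    HasSum (fun j : ℕ => deriv (deriv (LJ σ)) (a * ((j : ℝ) + 1)))
      (156 * σ ^ 12 * a ^ (-14 : ℤ) * zetaR 14 - 42 * σ ^ 6 * a ^ (-8 : ℤ) * zetaR 8) := by
  have h14 := hasSum_one_div_nat_add_one_pow_zetaR (n := 14) (by norm_num)
  have h8 := hasSum_one_div_nat_add_one_pow_zetaR (n := 8) (by norm_num)
  push_cast at h14 h8
  refine ((h14.mul_left _).sub (h8.mul_left _)).congr_fun fun j => ?_
  rw [deriv_deriv_LJ σ (mul_ne_zero ha (by positivity)), mul_zpow, mul_zpow]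
  simp only [zpow_neg, zpow_ofNat, one_div]
  ring

theorem stmt18_general (σ a : ℝ) (ha : 0 < a) :
    (∑' j : ℕ, deriv (deriv (LJ σ)) (a * ((j : ℝ) + 1)) =
      (σ ^ 6 * a ^ (-14 : ℤ) * π ^ 8 / 467775) * (8 * σ ^ 6 * π ^ 6 - 2079 * a ^ 6)) ∧
    (∑' j : ℕ, deriv (deriv (LJ σ)) (a * ((j : ℝ) + 1)) =
      156 * σ ^ 12 * a ^ (-14 : ℤ) * zetaR 14 - 42 * σ ^ 6 * a ^ (-8 : ℤ) * zetaR 8) ∧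
    zetaR 8 = π ^ 8 / 9450 ∧
    zetaR 14 = 2 * π ^ 14 / 18243225 := by
  have hsum := (hasSum_deriv_deriv_LJ σ ha.ne').tsum_eq
  have ha8 : a ^ (-8 : ℤ) = a ^ (-14 : ℤ) * a ^ 6 := by
    rw [← zpow_natCast, ← zpow_add₀ ha.ne']
    norm_num
  refine ⟨?_, hsum, zetaR_eight, zetaR_fourteen⟩
  rw [hsum, zetaR_eight, zetaR_fourteen, ha8]
  ring

/-- `∑_{j=1}^∞ W_σ''(aj) = (σ^6 a^{−14} π^8/467775)(8σ^6π^6 − 2079 a^6)`,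
equivalently `156 σ^12 a^{−14} ζ(14) − 42 σ^6 a^{−8} ζ(8)`, with
`ζ(8) = π^8/9450` and `ζ(14) = 2π^14/18243225`. -/
theorem stmt18 (σ a : ℝ) (hσ : 0 < σ) (ha : 0 < a) :
    (∑' j : ℕ, deriv (deriv (LJ σ)) (a * ((j : ℝ) + 1)) =
      (σ ^ 6 * a ^ (-14 : ℤ) * π ^ 8 / 467775) * (8 * σ ^ 6 * π ^ 6 - 2079 * a ^ 6)) ∧
    (∑' j : ℕ, deriv (deriv (LJ σ)) (a * ((j : ℝ) + 1)) =
      156 * σ ^ 12 * a ^ (-14 : ℤ) * zetaR 14 - 42 * σ ^ 6 * a ^ (-8 : ℤ) * zetaR 8) ∧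
    zetaR 8 = π ^ 8 / 9450 ∧
    zetaR 14 = 2 * π ^ 14 / 18243225 :=
  stmt18_general σ a ha
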